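/- Let H be a Hopf algebra with invertible antipode, δ a character and σ a group-like element. If ^σℂ_δ is a right-left stable anti-Yetter-Drinfeld module over H, then ^{S⁻¹(σ)}ℂ_δ is a right-left stable anti-Yetter-Drinfeld module over the co-opposite Hopf algebra H^cop. -/

import Mathlib

/-! Since `S⁻¹` is an anti-automorphism inverting `S`, applying it to the anti-Yetter-Drinfeld expression
`δ(h₍₂₎) S(h₍₃₎) σ h₍₁₎` for `^σℂ_δ` yields `δ(h₍₂₎) S⁻¹(h₍₁₎) S⁻¹(σ) h₍₃₎`, the one for `^{S⁻¹(σ)}ℂ_δ` over `H^cop`.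
Stability follows because `S⁻¹(σ) = S(σ) = σ⁻¹` for group-like `σ`. -/

open TensorProduct

noncomputable section

variable {H : Type*} [Ring H] [HopfAlgebra ℂ H]

/-- A group-like element of a Hopf algebra: `Δ(σ) = σ ⊗ σ` and `ε(σ) = 1`. -/
def IsGroupLike (σ : H) : Prop :=
  Coalgebra.counit (R := ℂ) σ = 1 ∧ Coalgebra.comul (R := ℂ) σ = σ ⊗ₜ[ℂ] σ

/-- Iterated comultiplication `h ↦ h₍₁₎ ⊗ (h₍₂₎ ⊗ h₍₃₎)`. -/
def comul₂ : H →ₗ[ℂ] H ⊗[ℂ] (H ⊗[ℂ] H) :=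
  LinearMap.lTensor H (Coalgebra.comul (R := ℂ)) ∘ₗ Coalgebra.comul

/-- The linear map `h ↦ Σ δ(h₍₂₎) • (S(h₍₃₎) * σ * h₍₁₎)`, i.e. the right-hand
side of the anti-Yetter-Drinfeld condition for `^σℂ_δ` over `H`
(identifying `H ⊗ ℂ ≅ H`). -/
def aydMap (δ : H →ₐ[ℂ] ℂ) (σ : H) : H →ₗ[ℂ] H :=
  LinearMap.mul' ℂ H
    ∘ₗ TensorProduct.map (LinearMap.mulRight ℂ σ) LinearMap.id
    ∘ₗ (TensorProduct.comm ℂ H H).toLinearMap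
    ∘ₗ LinearMap.lTensor H
        ((TensorProduct.lid ℂ H).toLinearMap
          ∘ₗ TensorProduct.map δ.toLinearMap (HopfAlgebra.antipode (R := ℂ)))
    ∘ₗ comul₂

/-- `^σℂ_δ` is a stable right-left anti-Yetter-Drinfeld module over `H`. -/
def IsStableAntiYetterDrinfeld (δ : H →ₐ[ℂ] ℂ) (σ : H) : Prop :=
  δ σ = 1 ∧ ∀ h : H, aydMap δ σ h = δ h • σ

/-- The right-hand side of the anti-Yetter-Drinfeld condition for `^σ'ℂ_δ`
over the co-opposite Hopf algebra `H^cop` (whose Sweedler components are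
`h₍₁₎^cop ⊗ h₍₂₎^cop ⊗ h₍₃₎^cop = h₍₃₎ ⊗ h₍₂₎ ⊗ h₍₁₎` and whose antipode is
`S⁻¹`):  `h ↦ Σ δ(h₍₂₎) • (S⁻¹(h₍₁₎) * σ' * h₍₃₎)`. -/
def aydMapCop (δ : H →ₐ[ℂ] ℂ) (Sinv : H →ₗ[ℂ] H) (σ' : H) : H →ₗ[ℂ] H :=
  LinearMap.mul' ℂ H
    ∘ₗ TensorProduct.map (LinearMap.mulRight ℂ σ' ∘ₗ Sinv)
        ((TensorProduct.lid ℂ H).toLinearMap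
          ∘ₗ TensorProduct.map δ.toLinearMap LinearMap.id)
    ∘ₗ comul₂

/-- `^σ'ℂ_δ` is a stable right-left anti-Yetter-Drinfeld module over the
co-opposite Hopf algebra `H^cop`, whose antipode is the inverse `Sinv` of the
antipode of `H`. -/
def IsStableAntiYetterDrinfeldCop (δ : H →ₐ[ℂ] ℂ) (Sinv : H →ₗ[ℂ] H) (σ' : H) : Prop :=
  δ σ' = 1 ∧ ∀ h : H, aydMapCop δ Sinv σ' h = δ h • σ'


section AntipodeInverse

variable {R A : Type*} [CommSemiring R] [Semiring A] [HopfAlgebra R A] {Sinv : A →ₗ[R] A}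

lemma mul_antidistrib_of_antipode_inverse
    (h₁ : Sinv ∘ₗ HopfAlgebra.antipode R = LinearMap.id)
    (h₂ : HopfAlgebra.antipode R ∘ₗ Sinv = LinearMap.id) (x y : A) :
    Sinv (x * y) = Sinv y * Sinv x := by
  have hx : x = HopfAlgebra.antipode R (Sinv x) := (LinearMap.congr_fun h₂ x).symm
  have hy : y = HopfAlgebra.antipode R (Sinv y) := (LinearMap.congr_fun h₂ y).symm
  rw [hx, hy, ← HopfAlgebra.antipode_mul_antidistrib, ← LinearMap.comp_apply, h₁,
    LinearMap.id_apply, ← hx, ← hy]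

lemma IsGroupLikeElem.eq_antipode_of_antipode_inverse {a : A} (ha : IsGroupLikeElem R a)
    (h₁ : Sinv ∘ₗ HopfAlgebra.antipode R = LinearMap.id) :
    Sinv a = HopfAlgebra.antipode R a := by
  conv_lhs => rw [← ha.antipode_antipode]
  exact LinearMap.congr_fun h₁ _

end AntipodeInverse

lemma aydMapCop_eq_comp_aydMap (δ : H →ₐ[ℂ] ℂ) (σ : H) {Sinv : H →ₗ[ℂ] H}
    (hSinv₁ : Sinv ∘ₗ HopfAlgebra.antipode (R := ℂ) = LinearMap.id)
    (hSinv₂ : HopfAlgebra.antipode (R := ℂ) ∘ₗ Sinv = LinearMap.id) :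
    aydMapCop δ Sinv (Sinv σ) = Sinv ∘ₗ aydMap δ σ := by
  have hSinv_antipode (x : H) : Sinv (HopfAlgebra.antipode ℂ x) = x :=
    LinearMap.congr_fun hSinv₁ x
  simp only [aydMapCop, aydMap, ← LinearMap.comp_assoc]
  congr 1
  ext a b c
  simp [mul_antidistrib_of_antipode_inverse hSinv₁ hSinv₂, hSinv_antipode, mul_assoc]

/-- If `^σℂ_δ` is a right-left stable anti-Yetter-Drinfeld
module over `H` (a Hopf algebra with invertible antipode, with `S⁻¹ = Sinv`),
then `^{S⁻¹(σ)}ℂ_δ` is a right-left stable anti-Yetter-Drinfeld module over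
`H^cop`. -/
theorem sayd_cop_of_sayd
    (δ : H →ₐ[ℂ] ℂ) (σ : H) (hσ : IsGroupLike σ)
    (Sinv : H →ₗ[ℂ] H)
    (hSinv₁ : Sinv ∘ₗ HopfAlgebra.antipode (R := ℂ) = LinearMap.id)
    (hSinv₂ : HopfAlgebra.antipode (R := ℂ) ∘ₗ Sinv = LinearMap.id)
    (hsayd : IsStableAntiYetterDrinfeld δ σ) :
    IsStableAntiYetterDrinfeldCop δ Sinv (Sinv σ) := by
  obtain ⟨hδσ, hayd⟩ := hsayd
  have hσ' : IsGroupLikeElem ℂ σ := ⟨hσ.1, hσ.2⟩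
  refine ⟨?_, fun h => ?_⟩
  · have hδ := congrArg δ hσ'.mul_antipode_cancel
    rwa [map_mul, map_one, hδσ, one_mul, ← hσ'.eq_antipode_of_antipode_inverse hSinv₁] at hδ
  · rw [aydMapCop_eq_comp_aydMap δ σ hSinv₁ hSinv₂, LinearMap.comp_apply, hayd, map_smul]

end
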